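/- Let A be a Hopf algebra over a field k with bijective antipode S, let π : A → k be an algebra homomorphism and J = ker π. Equip the vector space A ⊗_k A with: (i) the left adjoint A-action a·(x ⊗ y) = Σ a₁x ⊗ yS(a₂); (ii) the commuting A-bimodule structure b∗(x ⊗ y)∗b' = xb' ⊗ by (left action by multiplication on the second factor, right action by multiplication on the first factor). Then the quotient of A ⊗ A by the subspace J·(A ⊗ A) (image of the adjoint action of J), with its induced A-bimodule structure from (ii), is isomorphic as an A-bimodule to ¹A^{Ξℓ[π]∘S²}, i.e. to A with left action by multiplication and right action a·x·b = x·(Ξℓ[π](S²(b))). -/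

import Mathlib

/-!
STATEMENT 5: Let `A` be a Hopf algebra over `k` with bijective antipode `S`, let
`π : A → k` be an algebra homomorphism with kernel `J`.  Equip `A ⊗ A` with the left
adjoint `A`-action `a·(x ⊗ y) = Σ a₁x ⊗ y S(a₂)` and with the commuting
`A`-bimodule structure `b ∗ (x ⊗ y) ∗ b' = x b' ⊗ b y`.  Then the quotient of
`A ⊗ A` by `J·(A ⊗ A)` (the span of the image of the adjoint action of `J`), with
the induced bimodule structure, is isomorphic as an `A`-bimodule to
`¹A^{Ξℓ[π]∘S²}`.
-/

open TensorProduct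

noncomputable section

variable (k A : Type) [Field k] [Ring A] [HopfAlgebra k A]

/-- The left winding endomorphism `Ξℓ[π] : a ↦ Σ π(a₁) a₂` of a Hopf algebra. -/
def windL (π : A →ₗ[k] k) : A →ₗ[k] A :=
  (TensorProduct.lid k A).toLinearMap ∘ₗ (TensorProduct.map π LinearMap.id) ∘ₗ Coalgebra.comul

/-- The left adjoint action of `A` on `A ⊗ A`:  `a · (x ⊗ y) = Σ a₁x ⊗ y S(a₂)`. -/
def adAct : A →ₗ[k] ((A ⊗[k] A) →ₗ[k] (A ⊗[k] A)) :=
  (TensorProduct.homTensorHomMap (RingHom.id k) A A A A) ∘ₗ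
    (TensorProduct.map (LinearMap.mul k A)
      ((LinearMap.mul k A).flip ∘ₗ HopfAlgebra.antipode (R := k))) ∘ₗ Coalgebra.comul

/-- The bimodule action `b ∗ (x ⊗ y) ∗ b' = x b' ⊗ b y` on `A ⊗ A`. -/
def bimodAct (b b' : A) : (A ⊗[k] A) →ₗ[k] (A ⊗[k] A) :=
  TensorProduct.map (LinearMap.mulRight k b') (LinearMap.mulLeft k b)

/-- The subspace `J · (A ⊗ A)`, the span of the image of the adjoint action of
`J = ker π`. -/
def Jsub (π : A →ₐ[k] k) : Submodule k (A ⊗[k] A) :=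
  Submodule.span k {z : A ⊗[k] A | ∃ a : A, π a = 0 ∧ ∃ w : A ⊗[k] A, adAct k A a w = z}

/-!
Write `g = Ξℓ[π] ∘ S²` and `F (x ⊗ y) = y · g x`. As `S` reverses products and coproducts and
`π ∘ S² = π`, the map `g` is multiplicative and `g a = ∑ π(a₁) S²(a₂)`. Hence `F` intertwines the
bimodule structures, and `∑ S(a₂) g(a₁) = π(a)` gives `F (a · w) = π(a) F w` for the adjoint
action, so `F` kills `J·(A ⊗ A)`. Conversely `x ⊗ y = ∑ x₁ · (1 ⊗ y S²(x₂))`, so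
`x ⊗ y ≡ 1 ⊗ F (x ⊗ y)` modulo `J·(A ⊗ A)`, and `y ↦ [1 ⊗ y]` inverts the map induced by `F`.
-/

open Coalgebra HopfAlgebra WithConv

theorem Coalgebra.sum_counit_right_smul {R C ι : Type*} [CommSemiring R] [AddCommMonoid C]
    [Module R C] [Coalgebra R C] {c : C} (r : Repr R c ι) :
    ∑ i ∈ r.index, counit (R := R) (r.right i) • r.left i = c := by
  simpa only [map_sum, _root_.TensorProduct.rid_tmul, one_smul] using
    congrArg (_root_.TensorProduct.rid R C) (sum_tmul_counit_eq r)

section Antipode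

variable {R H : Type*} [CommSemiring R] [Semiring H]

theorem Bialgebra.includeLeft_convMul_includeRight [Bialgebra R H] :
    toConv (Algebra.TensorProduct.includeLeft (R := R) (S := R) (A := H) (B := H)).toLinearMap *
      toConv (Algebra.TensorProduct.includeRight (R := R) (A := H) (B := H)).toLinearMap =
      toConv (comul (R := R) (A := H)) := by
  apply WithConv.ext
  ext a
  simpa [(ℛ R a).convMul_apply] using (ℛ R a).eq

variable [HopfAlgebra R H]

theorem AlgHom.toConv_comp_antipode_mul {B : Type*} [Semiring B] [Algebra R B] (f : H →ₐ[R] B) :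
    toConv (f.toLinearMap ∘ₗ antipode R) * toConv f.toLinearMap = 1 := by
  apply WithConv.ext
  ext a
  simp [(ℛ R a).convMul_apply, ← map_mul, ← map_sum, sum_antipode_mul_eq_algebraMap_counit]

theorem AlgHom.toConv_mul_comp_antipode {B : Type*} [Semiring B] [Algebra R B] (f : H →ₐ[R] B) :
    toConv f.toLinearMap * toConv (f.toLinearMap ∘ₗ antipode R) = 1 := by
  apply WithConv.ext
  ext a
  simp [(ℛ R a).convMul_apply, ← map_mul, ← map_sum, sum_mul_antipode_eq_algebraMap_counit]

theorem HopfAlgebra.includeRight_comp_antipode_convMul_includeLeft_comp_antipode :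
    toConv ((Algebra.TensorProduct.includeRight (R := R) (A := H) (B := H)).toLinearMap ∘ₗ
        antipode R) *
      toConv ((Algebra.TensorProduct.includeLeft (R := R) (S := R) (A := H) (B := H)).toLinearMap ∘ₗ
        antipode R) =
      toConv (map (antipode R) (antipode R) ∘ₗ (TensorProduct.comm R H H).toLinearMap ∘ₗ
        comul (R := R) (A := H)) := by
  apply WithConv.ext
  ext a
  simp [(ℛ R a).convMul_apply, ← (ℛ R a).eq]

/-- Both sides are convolution inverses of `comul`: the left one because `comul` is an algebra
map, the right one because `comul = includeLeft * includeRight` while the right side is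
`(includeRight ∘ S) * (includeLeft ∘ S)`. -/
theorem HopfAlgebra.comul_comp_antipode :
    comul ∘ₗ antipode R = map (antipode R) (antipode R) ∘ₗ
      (TensorProduct.comm R H H).toLinearMap ∘ₗ comul (R := R) (A := H) := by
  have hright : toConv (comul (R := R) (A := H)) *
      toConv (map (antipode R) (antipode R) ∘ₗ (TensorProduct.comm R H H).toLinearMap ∘ₗ
        comul (R := R) (A := H)) = 1 := by
    rw [← Bialgebra.includeLeft_convMul_includeRight,
      ← includeRight_comp_antipode_convMul_includeLeft_comp_antipode, mul_assoc,
      ← mul_assoc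
        (toConv (Algebra.TensorProduct.includeRight (R := R) (A := H) (B := H)).toLinearMap),
      AlgHom.toConv_mul_comp_antipode, one_mul, AlgHom.toConv_mul_comp_antipode]
  exact congrArg ofConv
    (left_inv_eq_right_inv (Bialgebra.comulAlgHom R H).toConv_comp_antipode_mul hright)

def Coalgebra.Repr.antipode {ι : Type*} {a : H} (r : Repr R a ι) :
    Repr R (HopfAlgebra.antipode R a) ι where
  index := r.index
  left i := HopfAlgebra.antipode R (r.right i)
  right i := HopfAlgebra.antipode R (r.left i)
  eq := by
    rw [← LinearMap.comp_apply (f := comul), comul_comp_antipode]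
    simp [← r.eq]

def AlgHom.compAntipode {B : Type*} [CommSemiring B] [Algebra R B] (f : H →ₐ[R] B) :
    H →ₐ[R] B :=
  .ofLinearMap (f.toLinearMap ∘ₗ antipode R) (by simp)
    (fun x y ↦ by simp [antipode_mul_antidistrib, mul_comm])

theorem AlgHom.apply_antipode_antipode {B : Type*} [CommSemiring B] [Algebra R B]
    (f : H →ₐ[R] B) (a : H) : f (antipode R (antipode R a)) = f a := by
  -- `f ∘ S ∘ S` and `f` are a left and a right convolution inverse of `f ∘ S`.
  have h := left_inv_eq_right_inv f.compAntipode.toConv_comp_antipode_mul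
    f.toConv_comp_antipode_mul
  exact congr($(congrArg ofConv h) a)

end Antipode

section Winding

variable {k A}

theorem windL_apply {ι : Type*} (φ : A →ₗ[k] k) {a : A} (r : Repr k a ι) :
    windL k A φ a = ∑ i ∈ r.index, φ (r.left i) • r.right i := by
  simp [windL, ← r.eq]

theorem windL_one (π : A →ₐ[k] k) : windL k A π.toLinearMap 1 = 1 := by
  simp [windL, Algebra.TensorProduct.one_def]

theorem windL_mul (π : A →ₐ[k] k) (x y : A) :
    windL k A π.toLinearMap (x * y) = windL k A π.toLinearMap x * windL k A π.toLinearMap y := by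
  rw [windL_apply _ ((ℛ k x).mul (ℛ k y)), windL_apply _ (ℛ k x), windL_apply _ (ℛ k y),
    Finset.sum_mul_sum]
  simp only [Repr.mul_index, Repr.mul_left, Repr.mul_right, Finset.sum_product,
    AlgHom.toLinearMap_apply, map_mul, smul_mul_smul_comm]

theorem windL_antipode_antipode (π : A →ₐ[k] k) {ι : Type*} {a : A} (r : Repr k a ι) :
    windL k A π.toLinearMap (antipode k (antipode k a)) =
      ∑ i ∈ r.index, π (r.left i) • antipode k (antipode k (r.right i)) := by
  simp [windL_apply _ r.antipode.antipode, Repr.antipode, π.apply_antipode_antipode]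

theorem windL_antipode_antipode_mul (π : A →ₐ[k] k) (x y : A) :
    windL k A π.toLinearMap (antipode k (antipode k (x * y))) =
      windL k A π.toLinearMap (antipode k (antipode k x)) *
        windL k A π.toLinearMap (antipode k (antipode k y)) := by
  rw [antipode_mul_antidistrib, antipode_mul_antidistrib, windL_mul]

end Winding

section AdjointAction

variable {k A}

theorem adAct_tmul {ι : Type*} {a : A} (r : Repr k a ι) (x y : A) :
    adAct k A a (x ⊗ₜ y) = ∑ i ∈ r.index, (r.left i * x) ⊗ₜ (y * antipode k (r.right i)) := by
  simp [adAct, ← r.eq]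

theorem adAct_one : adAct k A 1 = LinearMap.id := by
  ext x y
  simp [adAct, Algebra.TensorProduct.one_def]

theorem adAct_sub_smul_mem_Jsub (π : A →ₐ[k] k) (a : A) (w : A ⊗[k] A) :
    adAct k A a w - π a • w ∈ Jsub k A π := by
  refine Submodule.subset_span ⟨a - π a • 1, by simp, w, ?_⟩
  simp [adAct_one]

end AdjointAction

section Twisted

variable {k A}

/-- `x ⊗ y ↦ y · Ξℓ[π](S² x)`. -/
def toTwisted (π : A →ₐ[k] k) : A ⊗[k] A →ₗ[k] A :=
  TensorProduct.lift
    ((LinearMap.mul k A).flip ∘ₗ windL k A π.toLinearMap ∘ₗ antipode k ∘ₗ antipode k)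

variable (π : A →ₐ[k] k)

@[simp]
theorem toTwisted_tmul (x y : A) :
    toTwisted π (x ⊗ₜ y) = y * windL k A π.toLinearMap (antipode k (antipode k x)) := by
  simp [toTwisted]

theorem sum_antipode_mul_windL_antipode_antipode {ι : Type*} {a : A} (r : Repr k a ι) :
    ∑ i ∈ r.index, antipode k (r.right i) *
        windL k A π.toLinearMap (antipode k (antipode k (r.left i))) = π a • 1 := by
  let r₁ (i : ι) := ℛ k (r.left i)
  let r₂ (i : ι) := ℛ k (r.right i)
  let Ψ : A ⊗[k] (A ⊗[k] A) →ₗ[k] A := TensorProduct.lid k A ∘ₗ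
    map π.toLinearMap (antipode k ∘ₗ LinearMap.mul' k A ∘ₗ map (antipode k) LinearMap.id)
  have hΨ (u v w : A) : Ψ (u ⊗ₜ (v ⊗ₜ w)) = π u • antipode k (antipode k v * w) := by simp [Ψ]
  have coassoc := congrArg Ψ (sum_tmul_tmul_eq r r₁ r₂)
  simp only [map_sum, hΨ] at coassoc
  calc _ = ∑ i ∈ r.index, ∑ j ∈ (r₁ i).index,
        π ((r₁ i).left j) • antipode k (antipode k ((r₁ i).right j) * r.right i) := by
        refine Finset.sum_congr rfl fun i _ ↦ ?_
        simp [windL_antipode_antipode π (r₁ i), Finset.mul_sum, antipode_mul_antidistrib]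
    _ = ∑ i ∈ r.index, ∑ l ∈ (r₂ i).index,
        π (r.left i) • antipode k (antipode k ((r₂ i).left l) * (r₂ i).right l) := coassoc
    _ = π a • 1 := by
        simp_rw [← Finset.smul_sum, ← map_sum, sum_antipode_mul_eq_smul, map_smul, antipode_one,
          smul_smul, ← Finset.sum_smul]
        conv_rhs => rw [← sum_counit_right_smul r]
        simp [mul_comm]

theorem toTwisted_adAct (a : A) (w : A ⊗[k] A) :
    toTwisted π (adAct k A a w) = π a • toTwisted π w := by
  induction w using TensorProduct.induction_on with
  | zero => simp
  | add u v hu hv => simp [hu, hv]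
  | tmul x y =>
    have h := sum_antipode_mul_windL_antipode_antipode π (ℛ k a)
    simp only [adAct_tmul (ℛ k a), map_sum, toTwisted_tmul, windL_antipode_antipode_mul]
    simp only [← mul_assoc, ← Finset.sum_mul]
    simp only [mul_assoc y, ← Finset.mul_sum, h, mul_smul_comm, smul_mul_assoc, mul_one]

theorem Jsub_le_ker_toTwisted : Jsub k A π ≤ LinearMap.ker (toTwisted π) := by
  rw [Jsub, Submodule.span_le]
  rintro _ ⟨a, ha, w, rfl⟩
  simp [toTwisted_adAct, ha]

theorem sum_adAct_one_tmul_mul_antipode_antipode {ι : Type*} {x : A} (r : Repr k x ι) (y : A) :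
    ∑ i ∈ r.index, adAct k A (r.left i) (1 ⊗ₜ (y * antipode k (antipode k (r.right i)))) =
      x ⊗ₜ y := by
  let r₁ (i : ι) := ℛ k (r.left i)
  let r₂ (i : ι) := ℛ k (r.right i)
  let Ψ : A ⊗[k] (A ⊗[k] A) →ₗ[k] A ⊗[k] A := map LinearMap.id
    (LinearMap.mulLeft k y ∘ₗ antipode k ∘ₗ LinearMap.mul' k A ∘ₗ map LinearMap.id (antipode k))
  have hΨ (u v w : A) : Ψ (u ⊗ₜ (v ⊗ₜ w)) = u ⊗ₜ (y * antipode k (v * antipode k w)) := by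
    simp [Ψ]
  have coassoc := congrArg Ψ (sum_tmul_tmul_eq r r₁ r₂)
  simp only [map_sum, hΨ] at coassoc
  calc _ = ∑ i ∈ r.index, ∑ j ∈ (r₁ i).index,
        (r₁ i).left j ⊗ₜ (y * antipode k ((r₁ i).right j * antipode k (r.right i))) := by
        refine Finset.sum_congr rfl fun i _ ↦ ?_
        simp [adAct_tmul (r₁ i), antipode_mul_antidistrib, mul_assoc]
    _ = ∑ i ∈ r.index, ∑ l ∈ (r₂ i).index,
        r.left i ⊗ₜ (y * antipode k ((r₂ i).left l * antipode k ((r₂ i).right l))) := coassoc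
    _ = x ⊗ₜ y := by
        simp_rw [← TensorProduct.tmul_sum, ← Finset.mul_sum, ← map_sum,
          sum_mul_antipode_eq_smul, map_smul, antipode_one, mul_smul_comm, mul_one,
          TensorProduct.tmul_smul, TensorProduct.smul_tmul', ← TensorProduct.sum_tmul,
          sum_counit_right_smul]

theorem tmul_sub_one_tmul_toTwisted_mem_Jsub (x y : A) :
    x ⊗ₜ y - 1 ⊗ₜ toTwisted π (x ⊗ₜ y) ∈ Jsub k A π := by
  have hsum : 1 ⊗ₜ toTwisted π (x ⊗ₜ y) = ∑ i ∈ (ℛ k x).index,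
      π ((ℛ k x).left i) • (1 ⊗ₜ (y * antipode k (antipode k ((ℛ k x).right i))) : A ⊗[k] A) := by
    simp [windL_antipode_antipode π (ℛ k x), Finset.mul_sum, TensorProduct.tmul_sum,
      TensorProduct.tmul_smul]
  rw [hsum, ← sum_adAct_one_tmul_mul_antipode_antipode (ℛ k x) y, ← Finset.sum_sub_distrib]
  exact Submodule.sum_mem _ fun i _ ↦ adAct_sub_smul_mem_Jsub π _ _

theorem toTwisted_bimodAct (b b' : A) (w : A ⊗[k] A) :
    toTwisted π (bimodAct k A b b' w) =
      b * toTwisted π w * windL k A π.toLinearMap (antipode k (antipode k b')) := by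
  induction w using TensorProduct.induction_on with
  | zero => simp
  | add u v hu hv => simp [hu, hv, mul_add, add_mul]
  | tmul x y => simp [bimodAct, windL_antipode_antipode_mul, mul_assoc]

end Twisted

theorem quotient_by_adjoint_action_of_kernel (π : A →ₐ[k] k) :
    ∃ e : ((A ⊗[k] A) ⧸ Jsub k A π) ≃ₗ[k] A,
      ∀ (b b' : A) (w : A ⊗[k] A),
        e (Submodule.Quotient.mk (bimodAct k A b b' w))
          = b * e (Submodule.Quotient.mk w)
              * windL k A π.toLinearMap
                  (HopfAlgebra.antipode (R := k) (HopfAlgebra.antipode (R := k) b')) := by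
  let toQuotient : A →ₗ[k] (A ⊗[k] A) ⧸ Jsub k A π := (Jsub k A π).mkQ ∘ₗ TensorProduct.mk k A A 1
  refine ⟨.ofLinearMap ((Jsub k A π).liftQ (toTwisted π) (Jsub_le_ker_toTwisted π)) toQuotient
    ?_ ?_, fun b b' w ↦ toTwisted_bimodAct π b b' w⟩
  · ext y
    simp [toQuotient, windL_one]
  · apply Submodule.linearMap_qext
    ext x y
    simpa [toQuotient, Submodule.Quotient.eq] using
      Submodule.neg_mem _ (tmul_sub_one_tmul_toTwisted_mem_Jsub π x y)

end
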